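/- arXiv:1005.4331 — 3 statements merged into one kernel-verified Lean document; each statement's English description precedes it below -/
import Mathlib

section
/- Let $Y \to Z \to X$ be maps of covers with $Y \to X$ and $Z \to X$ covers. Given a 2-cocycle $\beta \in Z^2(Z \to X, G)$ and a 1-cochain $\delta \in C^1(Y \to X, G)$ whose coboundary equals the pullback of $\beta$ along $Y \to Z$, the assignment $(y, y') \mapsto \beta(z, z, z)/\delta(y, y')$, for $(y, y') \in Y \times_Z Y$ lying over $z \in Z$, defines a 1-cocycle in $Z^1(Y \to Z, G)$. -/
/- STATEMENT 8 (from the proof of Lemma 3.2): `Y → Z → X` maps of covers,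
`β ∈ Z²(Z → X, G)` a 2-cocycle, `δ ∈ C¹(Y → X, G)` whose coboundary is the
pullback of `β` along `q : Y → Z`.  Then `(y, y') ↦ β(z,z,z)/δ(y,y')` for
`(y,y') ∈ Y ×_Z Y` over `z` is a 1-cocycle in `Z¹(Y → Z, G)`. -/
theorem quotient_one_cocycle
    (X Z Y G : Type) [CommGroup G]
    (p : Z → X) (q : Y → Z)
    (β : Z → Z → Z → G)
    (hβ : ∀ z0 z1 z2 z3 : Z, p z0 = p z1 → p z1 = p z2 → p z2 = p z3 →
      β z1 z2 z3 * β z0 z1 z3 = β z0 z2 z3 * β z0 z1 z2)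
    (δ : Y → Y → G)
    (hδ : ∀ y y' y'' : Y, p (q y) = p (q y') → p (q y') = p (q y'') →
      δ y y' * δ y' y'' / δ y y'' = β (q y) (q y') (q y'')) :
    ∀ y y' y'' : Y, q y = q y' → q y' = q y'' →
      (β (q y) (q y) (q y) / δ y y') * (β (q y') (q y') (q y') / δ y' y'') =
        β (q y) (q y) (q y) / δ y y'' := by
  intro y y' y'' h1 h2
  have h := hδ y y' y'' (by rw [h1]) (by rw [h2])
  rw [← h2, ← h1] at h
  rw [← h1]
  have hd : δ y y'' = δ y y' * δ y' y'' / β (q y) (q y) (q y) := by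
    rw [← h]; simp [div_eq_mul_inv, mul_inv, mul_comm, mul_assoc, mul_left_comm]
  rw [hd]
  simp [div_eq_mul_inv, mul_inv, mul_comm, mul_assoc, mul_left_comm]
end

section
/- Let $G$ be an abelian presheaf on a category with fiber products, and let $Y \to X$ be a cover. Suppose $\varepsilon_i, \varepsilon_j$ are sections of $G$ over restrictions of $Y$ satisfying $\varepsilon_i(y')/\varepsilon_i(y) = \beta(z,z,z)/\delta(y,y')$ for $(y,y') \in Y \times_Z Y$ over $z$, where $\delta \in C^1(Y \to X, G)$ has coboundary equal to the pullback of $\beta \in Z^2(Z \to X, G)$. Then for $(y, y') \in Y \times_X Y$ over $(z, z') \in Z \times_X Z$, the quantity $\frac{\varepsilon_j(y')}{\varepsilon_i(y)} \delta(y, y')$ depends only on $(z, z')$ (not on the choice of $y$ over $z$ and $y'$ over $z'$), and the resulting function $\delta_0(z, z')$ is a 1-cochain for $Z \to X$ whose coboundary is $\beta$. -/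
private lemma aux_ratio (G : Type) [CommGroup G] (a b c d1 d2 d3 : G) :
    (a/b * d1) * (c/a * d2) / (c/b * d3) = d1 * d2 / d3 := by
  rw [mul_mul_mul_comm, div_mul_div_comm, mul_comm b a, mul_div_mul_left_eq_div,
    mul_div_mul_left_eq_div]

/- STATEMENT 9 (descent computation in Lemma 3.2): with `β ∈ Z²(Z → X, G)`,
`δ ∈ C¹(Y → X, G)` whose coboundary is the pullback of `β`, and local sections
`ε i : Y → G` satisfying `ε i y' / ε i y = β(z,z,z)/δ(y,y')` for `y, y'` over the
same `z ∈ Z`: the quantity `(ε j y' / ε i y) · δ(y,y')` depends only on the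
images `(z, z') = (q y, q y')`, and the resulting 1-cochain `δ₀` for `Z → X`
has coboundary `β`. -/
theorem descent_one_cochain
    (X Z Y G ι : Type) [CommGroup G]
    (p : Z → X) (q : Y → Z)
    (β : Z → Z → Z → G)
    (hβ : ∀ z0 z1 z2 z3 : Z, p z0 = p z1 → p z1 = p z2 → p z2 = p z3 →
      β z1 z2 z3 * β z0 z1 z3 = β z0 z2 z3 * β z0 z1 z2)
    (δ : Y → Y → G)
    (hδ : ∀ y y' y'' : Y, p (q y) = p (q y') → p (q y') = p (q y'') →
      δ y y' * δ y' y'' / δ y y'' = β (q y) (q y') (q y''))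
    (ε : ι → Y → G)
    (hε : ∀ (i : ι) (y y' : Y), q y = q y' →
      ε i y' / ε i y = β (q y) (q y) (q y) / δ y y') :
    (∀ (i j : ι) (y y' u u' : Y), q y = q u → q y' = q u' →
        p (q y) = p (q y') →
        ε j y' / ε i y * δ y y' = ε j u' / ε i u * δ u u') ∧
    (∀ (i j l : ι) (y y' y'' : Y), p (q y) = p (q y') → p (q y') = p (q y'') →
        (ε j y' / ε i y * δ y y') * (ε l y'' / ε j y' * δ y' y'') /
          (ε l y'' / ε i y * δ y y'') = β (q y) (q y') (q y'')) := by
  constructor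
  · intro i j y y' u u' hu hu' hpp
    -- the two coboundary relations
    have e1 := hδ y u u' (by rw [hu]) (by rw [← hu, ← hu']; exact hpp)
    have e2 := hδ y y' u' hpp (by rw [← hu'])
    -- degenerate cocycle identities
    have b1 : β (q y) (q y) (q y') = β (q y) (q y) (q y) := by
      have := hβ (q y) (q y) (q y) (q y') rfl rfl hpp
      exact mul_left_cancel this
    have b2 : β (q y') (q y') (q y') = β (q y) (q y') (q y') := by
      have := hβ (q y) (q y') (q y') (q y') hpp rfl rfl
      exact mul_right_cancel this
    rw [← hu, ← hu'] at e1
    rw [← hu'] at e2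
    rw [div_eq_iff_eq_mul, b1] at e1
    rw [div_eq_iff_eq_mul, ← b2] at e2
    have f1 := hε i y u hu
    have f2 := hε j y' u' hu'
    rw [div_eq_div_iff_mul_eq_mul] at f1 f2
    rw [div_mul_eq_mul_div, div_mul_eq_mul_div, div_eq_div_iff_mul_eq_mul]
    refine mul_right_cancel (b := δ y u * δ y' u') ?_
    calc (ε j y' * δ y y' * ε i u) * (δ y u * δ y' u')
        = (ε j y') * ((δ y y' * δ y' u') * (ε i u * δ y u)) := by ac_rfl
      _ = (ε j y') * ((β (q y') (q y') (q y') * δ y u')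
            * (β (q y) (q y) (q y) * ε i y)) := by rw [e2, f1]
      _ = ((β (q y') (q y') (q y') * ε j y')
            * (β (q y) (q y) (q y) * δ y u')) * ε i y := by ac_rfl
      _ = ((ε j u' * δ y' u') * (δ y u * δ u u')) * ε i y := by rw [← f2, ← e1]
      _ = (ε j u' * δ u u' * ε i y) * (δ y u * δ y' u') := by ac_rfl
  · intro i j l y y' y'' h1 h2
    rw [← hδ y y' y'' h1 h2]
    exact aux_ratio G (ε j y') (ε i y) (ε l y'') (δ y y') (δ y' y'') (δ y y'')
end

section
/- Continuing the previous setup: assuming in addition the normalization $\varepsilon^{(g,g')}(y)\varepsilon^{(gg',g'')}(y) = \varepsilon^{(g,g'g'')}(y)\,{}^g\varepsilon^{(g',g'')}(y)$ for all $g, g', g''$ and all $y$, define $\beta^{(g,g')}(y,y',y'') = \frac{\beta(y,y',y'')\,\varepsilon^{(g,g')}(y'')}{\delta^{(g)}(y',y'')}$. Then the twisted cocycle identity $\beta^{(g,g')}(y,y',y'')\,\beta^{(gg',g'')}(y,y'',y''') = \beta^{(g,g'g'')}(y,y',y''')\,{}^g\beta^{(g',g'')}(y',y'',y''')$ holds,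 and $\beta^{(e,e)}$ differs from $\beta$ by a coboundary (in fact equals $\beta$ up to coboundary). -/
/- STATEMENT 13 (conclusion of the proof of Prop. 7.2): with the normalized
0-cochains `ε` (hypothesis `hnorm`), setting
`β⁽ᵍ,ᵍ'⁾(y,y',y'') = β(y,y',y'') ε⁽ᵍ,ᵍ'⁾(y'') / δ⁽ᵍ⁾(y',y'')`, the twisted
cocycle identity
`β⁽ᵍ,ᵍ'⁾(y,y',y'') β⁽ᵍᵍ',ᵍ''⁾(y,y'',y''') =
 β⁽ᵍ,ᵍ'ᵍ''⁾(y,y',y''') ᵍβ⁽ᵍ',ᵍ''⁾(y',y'',y''')` holds, and `β⁽ᵉ,ᵉ⁾`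
differs from `β` by a coboundary. -/
theorem twisted_cocycle_identity
    (G X Y M : Type) [Group G] [CommGroup M] [MulDistribMulAction G M]
    (p : Y → X)
    (β : Y → Y → Y → M) (δ : G → Y → Y → M) (ε : G → G → Y → M)
    (hβ : ∀ y0 y1 y2 y3 : Y, p y0 = p y1 → p y1 = p y2 → p y2 = p y3 →
      β y1 y2 y3 * β y0 y1 y3 = β y0 y2 y3 * β y0 y1 y2)
    (hδ : ∀ (g : G) (y y' y'' : Y), p y = p y' → p y' = p y'' →
      δ g y y' * δ g y' y'' / δ g y y'' = β y y' y'' / g • β y y' y'')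
    (hε : ∀ (g g' : G) (y y' : Y), p y = p y' →
      ε g g' y' / ε g g' y = δ g y y' * g • δ g' y y' / δ (g * g') y y')
    (hnorm : ∀ (g g' g'' : G) (y : Y),
      ε g g' y * ε (g * g') g'' y = ε g (g' * g'') y * g • ε g' g'' y) :
    (∀ (g g' g'' : G) (y y' y'' y''' : Y),
        p y = p y' → p y' = p y'' → p y'' = p y''' →
        (β y y' y'' * ε g g' y'' / δ g y' y'') *
          (β y y'' y''' * ε (g * g') g'' y''' / δ (g * g') y'' y''') =
        (β y y' y''' * ε g (g' * g'') y''' / δ g y' y''') *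
          g • (β y' y'' y''' * ε g' g'' y''' / δ g' y'' y''')) ∧
    (∃ c : Y → Y → M, ∀ y y' y'' : Y, p y = p y' → p y' = p y'' →
        (β y y' y'' * ε 1 1 y'' / δ 1 y' y'') / β y y' y'' =
          c y y' * c y' y'' / c y y'') := by
  constructor
  · intro g g' g'' y y' y'' y''' h1 h2 h3
    have A := hβ y y' y'' y''' h1 h2 h3
    have B := hδ g y' y'' y''' h2 h3
    have C := hε g g' y'' y''' h3
    have D := hnorm g g' g'' y'''
    have hsd : g • (β y' y'' y''' * ε g' g'' y''' / δ g' y'' y''') =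
        g • β y' y'' y''' * g • ε g' g'' y''' / g • δ g' y'' y''' := by
      rw [smul_div', smul_mul']
    rw [hsd]
    set b1 := β y y' y''
    set b2 := β y y'' y'''
    set b3 := β y' y'' y'''
    set b4 := β y y' y'''
    set gb3 := g • β y' y'' y''' with hgb3
    set d1 := δ g y' y''
    set d2 := δ (g * g') y'' y'''
    set d3 := δ g y' y'''
    set d4 := g • δ g' y'' y'''
    set d5 := δ g y'' y'''
    set e1 := ε g g' y''
    set e2 := ε (g * g') g'' y'''
    set e3 := ε g (g' * g'') y'''
    set e4 := g • ε g' g'' y'''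
    set e5 := ε g g' y'''
    -- A : b3 * b4 = b2 * b1
    -- B : d1 * d5 / d3 = b3 / gb3
    -- C : e5 / e1 = d5 * d4 / d2
    -- D : e5 * e2 = e3 * e4
    have B' : d1 * d5 * gb3 = b3 * d3 := by
      rw [div_eq_div_iff_mul_eq_mul] at B; exact B
    have C' : e5 * d2 = d5 * d4 * e1 := by
      rw [div_eq_div_iff_mul_eq_mul] at C; exact C
    rw [div_mul_div_comm, div_mul_div_comm, div_eq_div_iff_mul_eq_mul]
    have key : b1 * e1 * (b2 * e2) * (d3 * d4) * (b3 * (e5 * (d5 * d4))) =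
        b4 * e3 * (gb3 * e4) * (d1 * d2) * (b3 * (e5 * (d5 * d4))) := by
      calc b1 * e1 * (b2 * e2) * (d3 * d4) * (b3 * (e5 * (d5 * d4)))
          = (b2 * b1) * (d5 * d4 * e1) * (e2 * (e5 * (d3 * (d4 * b3)))) := by
            simp [mul_comm, mul_assoc, mul_left_comm]
        _ = (b3 * b4) * (e5 * d2) * (e2 * (e5 * (d3 * (d4 * b3)))) := by
            rw [← A, ← C']
        _ = (b3 * d3) * (e5 * e2) * (b4 * (d2 * (e5 * (d4 * b3)))) := by
            simp [mul_comm, mul_assoc, mul_left_comm]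
        _ = (d1 * d5 * gb3) * (e3 * e4) * (b4 * (d2 * (e5 * (d4 * b3)))) := by
            rw [← B', D]
        _ = b4 * e3 * (gb3 * e4) * (d1 * d2) * (b3 * (e5 * (d5 * d4))) := by
            simp [mul_comm, mul_assoc, mul_left_comm]
    exact mul_right_cancel key
  · refine ⟨fun a _ => ε 1 1 a, fun y y' y'' h1 h2 => ?_⟩
    have h := hε 1 1 y' y'' h2
    simp only [one_mul, one_smul] at h
    rw [mul_div_cancel_right] at h
    rw [← h]
    simp [div_eq_mul_inv, mul_comm, mul_assoc, mul_left_comm, mul_inv_rev]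
end
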